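/- Suppose m̄: ℝ^{k} × ℝ^d → ℝ satisfies: m̄(θ₀, x) ≥ η > 0 for all x outside a ball B(x₀, δ), m̄ is differentiable in θ near (θ₀, x) with derivative ∂_θ m̄ continuous at (θ₀, x₀), and m̄(θ₀, x) − m̄(θ₀, x₀) = ‖x−x₀‖^γ ψ((x−x₀)/‖x−x₀‖)(1+o(1)) as x → x₀ with ψ ≥ ψ̲ > 0 continuous on the sphere and m̄(θ₀,x₀)=0. Then for any a ∈ ℝ^k there exist constants C, r̄ > 0 such that for all 0 < r ≤ r̄: m̄(θ₀ + ra, x) ≥ 0 whenever ‖x − x₀‖ ≥ C·r^{1/γ}. -/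
import Mathlib


set_option maxHeartbeats 1000000 in
/-- Localization of the region where the moment function can be negative under
local alternatives: if m̄(θ₀,·) is bounded away from zero outside every
neighborhood of x₀, has the local expansion ‖x−x₀‖^γ ψ((x−x₀)/‖x−x₀‖)(1+o(1))
at x₀ with ψ ≥ ψ̲ > 0, and is differentiable in θ near θ₀ with derivative
continuous at (θ₀,x₀) and uniformly bounded, then for any direction a there are
C, r̄ > 0 such that m̄(θ₀+ra, x) ≥ 0 whenever 0 < r ≤ r̄ and ‖x−x₀‖ ≥ C·r^{1/γ}. -/
theorem stmt18 {dθ dx : ℕ}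
    (m : EuclideanSpace ℝ (Fin dθ) → EuclideanSpace ℝ (Fin dx) → ℝ)
    (θ₀ : EuclideanSpace ℝ (Fin dθ)) (x₀ : EuclideanSpace ℝ (Fin dx))
    (γ ψlow : ℝ) (hγ : 0 < γ) (hψlow : 0 < ψlow)
    (ψ : EuclideanSpace ℝ (Fin dx) → ℝ) (hψcont : Continuous ψ)
    (hψ : ∀ v : EuclideanSpace ℝ (Fin dx), ‖v‖ = 1 → ψlow ≤ ψ v)
    (hzero : m θ₀ x₀ = 0)
    -- m̄(θ₀,·) is bounded away from zero outside every neighborhood of x₀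
    (hout : ∀ δ > (0 : ℝ), ∃ η > (0 : ℝ), ∀ x, δ ≤ ‖x - x₀‖ → η ≤ m θ₀ x)
    -- local expansion m̄(θ₀,x) − m̄(θ₀,x₀) = ‖x−x₀‖^γ ψ((x−x₀)/‖x−x₀‖)(1+o(1))
    (hexp : ∀ ε > (0 : ℝ), ∃ δ' > (0 : ℝ), ∀ x, x ≠ x₀ → ‖x - x₀‖ < δ' →
      |m θ₀ x - m θ₀ x₀ - ‖x - x₀‖ ^ γ * ψ (‖x - x₀‖⁻¹ • (x - x₀))| ≤
        ε * ‖x - x₀‖ ^ γ)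
    -- differentiability in θ near θ₀, derivative continuous at (θ₀,x₀) and
    -- uniformly bounded (uniform O(r) perturbation)
    (D : EuclideanSpace ℝ (Fin dθ) → EuclideanSpace ℝ (Fin dx) →
      (EuclideanSpace ℝ (Fin dθ) →L[ℝ] ℝ))
    (ε₀ : ℝ) (hε₀ : 0 < ε₀)
    (hdiff : ∀ θ x, ‖θ - θ₀‖ < ε₀ → HasFDerivAt (fun t => m t x) (D θ x) θ)
    (hDcont : ContinuousAt (fun q : EuclideanSpace ℝ (Fin dθ) ×
      EuclideanSpace ℝ (Fin dx) => D q.1 q.2) (θ₀, x₀))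
    (K : ℝ) (hDbd : ∀ θ x, ‖θ - θ₀‖ < ε₀ → ‖D θ x‖ ≤ K) :
    ∀ a : EuclideanSpace ℝ (Fin dθ), ∃ C > (0 : ℝ), ∃ rbar > (0 : ℝ),
      ∀ r : ℝ, 0 < r → r ≤ rbar → ∀ x,
        C * r ^ (1 / γ) ≤ ‖x - x₀‖ → 0 ≤ m (θ₀ + r • a) x := by

  intro a
  have hK0 : 0 ≤ K := le_trans (norm_nonneg _) (hDbd θ₀ x₀ (by simpa using hε₀))
  set Kb := K * ‖a‖ with hKbdef
  have hKb0 : 0 ≤ Kb := mul_nonneg hK0 (norm_nonneg a)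
  obtain ⟨δ', hδ', hδexp⟩ := hexp (ψlow/2) (by linarith)
  obtain ⟨η, hη, hηout⟩ := hout δ' hδ'
  refine ⟨(2*(Kb+1)/ψlow) ^ (1/γ), Real.rpow_pos_of_pos (by positivity) _,
    min (ε₀/(2*(‖a‖+1))) (η/(Kb+1)), lt_min (by positivity) (by positivity), ?_⟩
  intro r hr hrle x hx
  have hra : ‖(θ₀ + r • a) - θ₀‖ < ε₀ := by
    rw [add_sub_cancel_left, norm_smul, Real.norm_of_nonneg hr.le]
    have h1 : r ≤ ε₀/(2*(‖a‖+1)) := le_trans hrle (min_le_left _ _)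
    have h2 : r * ‖a‖ ≤ (ε₀/(2*(‖a‖+1))) * ‖a‖ :=
      mul_le_mul_of_nonneg_right h1 (norm_nonneg a)
    have h3 : (ε₀/(2*(‖a‖+1))) * ‖a‖ < ε₀ := by
      rw [div_mul_eq_mul_div, div_lt_iff₀ (by positivity)]
      nlinarith [norm_nonneg a, hε₀]
    linarith
  have hpert : |m (θ₀ + r • a) x - m θ₀ x| ≤ Kb * r := by
    have hconv : Convex ℝ (Metric.ball θ₀ ε₀) := convex_ball _ _
    have hmv : ‖m (θ₀ + r • a) x - m θ₀ x‖ ≤ K * ‖(θ₀ + r • a) - θ₀‖ :=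
      hconv.norm_image_sub_le_of_norm_hasFDerivWithin_le
      (f := fun t => m t x) (f' := fun t => D t x) (C := K)
      (fun θ hθ => (hdiff θ x (by simpa [Metric.mem_ball, dist_eq_norm] using hθ)).hasFDerivWithinAt)
      (fun θ hθ => hDbd θ x (by simpa [Metric.mem_ball, dist_eq_norm] using hθ))
      (Metric.mem_ball_self hε₀) (by simpa [Metric.mem_ball, dist_eq_norm] using hra)
    have heq : ‖(θ₀ + r • a) - θ₀‖ = r * ‖a‖ := by
      rw [add_sub_cancel_left, norm_smul, Real.norm_of_nonneg hr.le]
    calc |m (θ₀ + r • a) x - m θ₀ x| ≤ K * ‖(θ₀ + r • a) - θ₀‖ := hmv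
      _ = Kb * r := by rw [heq]; ring
  have habs := abs_le.mp hpert
  rcases lt_or_ge ‖x - x₀‖ δ' with hcase | hcase
  · -- near x₀ : use the local expansion
    have hxpos : (0:ℝ) < ‖x - x₀‖ :=
      lt_of_lt_of_le (by positivity) hx
    have hxne : x ≠ x₀ := by
      intro h; rw [h, sub_self, norm_zero] at hxpos; exact lt_irrefl _ hxpos
    have hψu : ψlow ≤ ψ (‖x - x₀‖⁻¹ • (x - x₀)) := by
      apply hψ
      rw [norm_smul, norm_inv, norm_norm, inv_mul_cancel₀ hxpos.ne']
    have hbd := hδexp x hxne hcase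
    rw [hzero, sub_zero] at hbd
    have hrg : (0:ℝ) ≤ ‖x - x₀‖ ^ γ := Real.rpow_nonneg (norm_nonneg _) _
    have hlow : ψlow/2 * ‖x - x₀‖ ^ γ ≤ m θ₀ x := by
      have h1 := (abs_le.mp hbd).1
      nlinarith [mul_le_mul_of_nonneg_left hψu hrg]
    -- ‖x-x₀‖^γ ≥ C^γ * r = (2(Kb+1)/ψlow) * r
    have hCγ : ((2*(Kb+1)/ψlow) ^ (1/γ) * r ^ (1/γ)) ^ γ = (2*(Kb+1)/ψlow) * r := by
      rw [← Real.mul_rpow (by positivity) hr.le, ← Real.rpow_mul (by positivity),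
        one_div_mul_cancel hγ.ne', Real.rpow_one]
    have hmono : ((2*(Kb+1)/ψlow) ^ (1/γ) * r ^ (1/γ)) ^ γ ≤ ‖x - x₀‖ ^ γ :=
      Real.rpow_le_rpow (by positivity) hx hγ.le
    rw [hCγ] at hmono
    have : (Kb+1) * r ≤ m θ₀ x := by
      have := mul_le_mul_of_nonneg_left hmono (by positivity : (0:ℝ) ≤ ψlow/2)
      have hψne : ψlow ≠ 0 := hψlow.ne'
      calc (Kb+1) * r = ψlow/2 * ((2*(Kb+1)/ψlow) * r) := by field_simp
        _ ≤ ψlow/2 * ‖x - x₀‖ ^ γ := this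
        _ ≤ m θ₀ x := hlow
    nlinarith
  · -- away from x₀ : use the uniform lower bound η
    have hm := hηout x hcase
    have hrη : r ≤ η/(Kb+1) := le_trans hrle (min_le_right _ _)
    have : Kb * r ≤ η := by
      rw [le_div_iff₀ (by positivity)] at hrη
      nlinarith
    linarith
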